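/- The set X = {-1, 1}^n of vertices of the n-dimensional hypercube (viewed in ℝ^n) has the property that for any two distinct vertices x₁, x₂ there exist two parallel hyperplanes, one through x₁ and one through x₂, such that X lies in the closed slab between them. Hence the maximal cardinality of such an antipodal set in ℝ^n is exactly 2^n. -/

import Mathlib

/-!
Two distinct sign vectors differ in some coordinate `i`, where one has entry `1` and the other
`-1`. The functional `x ↦ x₁ i * x i` then takes the value `1` at `x₁`, `-1` at `x₂`, and a
value in `{1, -1}` at every vertex, so the hyperplanes `x i = ±1` bound the required slab.
The vertices are in bijection with `{1, -1}^n`, whence their number `2^n`.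
-/

open Set

/-- The two parallel hyperplanes through `x₁` and `x₂` are the level sets `f = f x₁`, `f = f x₂`. -/
def IsAntipodal {E : Type*} [AddCommGroup E] [Module ℝ E] (X : Set E) : Prop :=
  ∀ x₁ ∈ X, ∀ x₂ ∈ X, x₁ ≠ x₂ → ∃ f : E →ₗ[ℝ] ℝ, f ≠ 0 ∧ ∀ x ∈ X, f x₂ ≤ f x ∧ f x ≤ f x₁

def hypercubeVertices (ι : Type*) : Set (EuclideanSpace ℝ ι) := {x | ∀ i, x i = 1 ∨ x i = -1}

lemma mul_le_mul_le_mul_self_of_eq_one_or_eq_neg_one {a b c : ℝ} (ha : a = 1 ∨ a = -1)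
    (hb : b = 1 ∨ b = -1) (hc : c = 1 ∨ c = -1) (hab : a ≠ b) :
    a * b ≤ a * c ∧ a * c ≤ a * a := by
  rcases ha with rfl | rfl <;> rcases hb with rfl | rfl <;> rcases hc with rfl | rfl <;>
    norm_num at *

theorem isAntipodal_hypercubeVertices (ι : Type*) : IsAntipodal (hypercubeVertices ι) := by
  intro x₁ h₁ x₂ h₂ hne
  obtain ⟨i, hi⟩ : ∃ i, x₁ i ≠ x₂ i := by
    by_contra! h
    exact hne (PiLp.ext h)
  refine ⟨x₁ i • PiLp.projₗ 2 (fun _ => ℝ) i, ?_, fun x hx => ?_⟩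
  · intro hf
    have := congrArg (· x₁) hf
    rcases h₁ i with h | h <;> simp [h] at this
  · exact mul_le_mul_le_mul_self_of_eq_one_or_eq_neg_one (h₁ i) (h₂ i) (hx i) hi

theorem hypercubeVertices_eq_preimage (ι : Type*) :
    hypercubeVertices ι = WithLp.ofLp ⁻¹' univ.pi fun _ => {1, -1} := by
  ext x
  simp [hypercubeVertices]

theorem ncard_hypercubeVertices (ι : Type*) [Fintype ι] :
    (hypercubeVertices ι).ncard = 2 ^ Fintype.card ι := by
  rw [hypercubeVertices_eq_preimage, ncard_def, encard_preimage_of_bijective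
    (WithLp.ofLp_bijective 2), encard_pi_eq_prod_encard, encard_pair (by norm_num)]
  simp

/-- The set `X = {-1,1}^n` of vertices of the hypercube in `ℝⁿ` has the antipodality
property: for any two distinct vertices `x₁, x₂` there are two parallel hyperplanes,
one through each, with `X` lying in the closed slab between them. Moreover its
cardinality is exactly `2^n`, which is maximal for sets with this property. -/
theorem hypercube_vertices_antipodal (n : ℕ) :
    (∀ x₁ ∈ {x : EuclideanSpace ℝ (Fin n) | ∀ i, x i = 1 ∨ x i = -1},
      ∀ x₂ ∈ {x : EuclideanSpace ℝ (Fin n) | ∀ i, x i = 1 ∨ x i = -1}, x₁ ≠ x₂ →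
        ∃ f : EuclideanSpace ℝ (Fin n) →ₗ[ℝ] ℝ, f ≠ 0 ∧
          ∀ x ∈ {x : EuclideanSpace ℝ (Fin n) | ∀ i, x i = 1 ∨ x i = -1},
            f x₂ ≤ f x ∧ f x ≤ f x₁) ∧
    {x : EuclideanSpace ℝ (Fin n) | ∀ i, x i = 1 ∨ x i = -1}.ncard = 2 ^ n :=
  ⟨isAntipodal_hypercubeVertices (Fin n),
    (ncard_hypercubeVertices (Fin n)).trans (by rw [Fintype.card_fin])⟩
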